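/- For every integer n ≥ 3, the map T_n satisfies T_n(V*_{n+}) = V_{n+}, and T_n(e_n(i)) = (1/2)·ω_n(i) for all i when n is even, while e_n(i) = R_n·ω_n(i) for all i and V*_{n+} = V_{n+} when n is odd. In particular every regular polygon theory is weakly self-dual, and every odd-sided regular polygon theory is self-dual. -/

import Mathlib

noncomputable section

/-- Standard inner product on `ℝ³`. -/
def dot3 (v w : Fin 3 → ℝ) : ℝ := ∑ i, v i * w i

/-- The angle `θ_n = π / n`. -/
def thetaN (n : ℕ) : ℝ := Real.pi / n

/-- `r_n = (cos θ_n)^{-1/2}`. -/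
def rN (n : ℕ) : ℝ := Real.sqrt (Real.cos (thetaN n))⁻¹

/-- `R_n = 1 / (1 + r_n²)`. -/
def RN (n : ℕ) : ℝ := 1 / (1 + rN n ^ 2)

/-- The pure states `ω_n(i)` of the regular polygon theory. -/
def omegaN (n i : ℕ) : Fin 3 → ℝ :=
  ![rN n * Real.cos (2 * (i : ℝ) * thetaN n), rN n * Real.sin (2 * (i : ℝ) * thetaN n), 1]

/-- The state space `Ω_n`, the convex hull of the pure states. -/
def OmegaN (n : ℕ) : Set (Fin 3 → ℝ) :=
  convexHull ℝ {v | ∃ i < n, v = omegaN n i}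

/-- The unit effect `u = (0,0,1)`. -/
def uEff : Fin 3 → ℝ := ![0, 0, 1]

/-- The pure effects `e_n(i)` (separate formulas for even and odd `n`). -/
def eN (n i : ℕ) : Fin 3 → ℝ :=
  if Even n then
    (1 / 2 : ℝ) • ![rN n * Real.cos ((2 * (i : ℝ) + 1) * thetaN n),
                    rN n * Real.sin ((2 * (i : ℝ) + 1) * thetaN n), 1]
  else
    RN n • ![rN n * Real.cos (2 * (i : ℝ) * thetaN n),
             rN n * Real.sin (2 * (i : ℝ) * thetaN n), 1]

/-- The complementary effect `ē_n(i) = u - e_n(i)`. -/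
def eBarN (n i : ℕ) : Fin 3 → ℝ := uEff - eN n i

/-- The effect space `E_n`. -/
def EffN (n : ℕ) : Set (Fin 3 → ℝ) :=
  {f | ∀ ω ∈ OmegaN n, dot3 f ω ∈ Set.Icc (0 : ℝ) 1}

/-- The positive cone `V_{n+}` generated by the state space. -/
def VposN (n : ℕ) : Set (Fin 3 → ℝ) :=
  {x | ∃ c : ℝ, 0 ≤ c ∧ ∃ ω ∈ OmegaN n, x = c • ω}

/-- The dual cone `V*_{n+}` generated by the effect space. -/
def VdualN (n : ℕ) : Set (Fin 3 → ℝ) :=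
  {x | ∃ c : ℝ, 0 ≤ c ∧ ∃ f ∈ EffN n, x = c • f}

/-- A state of `Ω_n ⊗_max Ω_n`, identified with a normalized cone-preserving linear map. -/
def IsState (n : ℕ) (η : (Fin 3 → ℝ) →ₗ[ℝ] (Fin 3 → ℝ)) : Prop :=
  (∀ x ∈ VdualN n, η x ∈ VposN n) ∧ dot3 uEff (η uEff) = 1

/-- A binary observable on `Ω_n`: a pair of effects summing to the unit effect. -/
def IsObservable (n : ℕ) (A : (Fin 3 → ℝ) × (Fin 3 → ℝ)) : Prop :=
  A.1 ∈ EffN n ∧ A.2 ∈ EffN n ∧ A.1 + A.2 = uEff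

/-- The observable `E_n(i) = (e_n(i), ē_n(i))`. -/
def EObs (n i : ℕ) : (Fin 3 → ℝ) × (Fin 3 → ℝ) := (eN n i, eBarN n i)

/-- The correlator `E(st) = Σ_{a,b} (-1)^{a+b} ⟨B^b, η(A^a)⟩`. -/
def corr (η : (Fin 3 → ℝ) →ₗ[ℝ] (Fin 3 → ℝ)) (A B : (Fin 3 → ℝ) × (Fin 3 → ℝ)) : ℝ :=
  dot3 B.1 (η A.1) - dot3 B.2 (η A.1) - dot3 B.1 (η A.2) + dot3 B.2 (η A.2)

/-- The CHSH value `C[η; A₀,A₁; B₀,B₁] = E(00) + E(01) + E(10) - E(11)`. -/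
def CHSH (η : (Fin 3 → ℝ) →ₗ[ℝ] (Fin 3 → ℝ))
    (A0 A1 B0 B1 : (Fin 3 → ℝ) × (Fin 3 → ℝ)) : ℝ :=
  corr η A0 B0 + corr η A0 B1 + corr η A1 B0 - corr η A1 B1

/-- `GL(Ω_n)`: linear bijections of `ℝ³` preserving the state space. -/
def GLOmega (n : ℕ) : Set ((Fin 3 → ℝ) →ₗ[ℝ] (Fin 3 → ℝ)) :=
  {T | Function.Bijective T ∧ T '' OmegaN n = OmegaN n}

/-- The order isomorphism `T_n`: a rotation by `θ_n` for even `n`, the identity for odd `n`. -/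
def TN (n : ℕ) : (Fin 3 → ℝ) →ₗ[ℝ] (Fin 3 → ℝ) :=
  if Even n then
    Matrix.toLin' !![Real.cos (thetaN n), Real.sin (thetaN n), 0;
                     -Real.sin (thetaN n), Real.cos (thetaN n), 0;
                     0, 0, 1]
  else LinearMap.id

/-- Maximally entangled states: elements of `T_n · GL(Ω_n)`. -/
def MaxEnt (n : ℕ) (η : (Fin 3 → ℝ) →ₗ[ℝ] (Fin 3 → ℝ)) : Prop :=
  ∃ T ∈ GLOmega n, η = (TN n).comp T

/-!
The positive cone `V₊` is the intersection of the half-spaces of the polygon's facets, whose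
normals are `ψ_j = (r cos((2j+1)θ + π), r sin((2j+1)θ + π), 1)`. Every vertex satisfies these
inequalities because `r² cos θ = 1` and `cos((2m+1)θ) ≤ cos θ`; conversely a point satisfying
them is a nonnegative combination of the two vertices bounding the angular sector of its
horizontal part and of the centre `u`. The dual cone `V*` is cut out by the vertices themselves.
For odd `n` the angles `(2j+1+n)θ` of the facet normals are even multiples of `θ`, so the normals
are vertices and `V* = V₊`; for even `n` they are odd multiples, so the normals are the vertices
rotated by `-θ`, and the orthogonal map `T_n`, this rotation, carries `V*` onto `V₊`.
-/

open Real Finset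

lemma cos_le_cos_of_le_of_le_two_pi_sub {x y : ℝ} (hy : 0 ≤ y) (hyx : y ≤ x)
    (hx : x ≤ 2 * π - y) : cos x ≤ cos y := by
  rcases le_total x π with hxπ | hπx
  · exact cos_le_cos_of_nonneg_of_le_pi hy hxπ hyx
  · rw [← cos_two_pi_sub x]
    exact cos_le_cos_of_nonneg_of_le_pi hy (by linarith) (by linarith)

lemma sin_sub_mul_add_sin_sub_mul_cos (α β φ : ℝ) :
    sin (β - φ) * cos α + sin (φ - α) * cos β = sin (β - α) * cos φ := by
  simp only [sin_sub]; ring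

lemma sin_sub_mul_add_sin_sub_mul_sin (α β φ : ℝ) :
    sin (β - φ) * sin α + sin (φ - α) * sin β = sin (β - α) * sin φ := by
  simp only [sin_sub]; ring

lemma vec3_ext {R : Type*} {v w : Fin 3 → R} (h₀ : v 0 = w 0) (h₁ : v 1 = w 1) (h₂ : v 2 = w 2) :
    v = w := by
  ext k; fin_cases k <;> assumption

lemma dot3_eq (v w : Fin 3 → ℝ) : dot3 v w = v 0 * w 0 + v 1 * w 1 + v 2 * w 2 :=
  Matrix.vec3_dotProduct v w

lemma dot3_comm (v w : Fin 3 → ℝ) : dot3 v w = dot3 w v := dotProduct_comm v w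

lemma dot3_smul_left (c : ℝ) (v w : Fin 3 → ℝ) : dot3 (c • v) w = c * dot3 v w :=
  smul_dotProduct c v w

lemma isLinearMap_dot3 (v : Fin 3 → ℝ) : IsLinearMap ℝ (dot3 v) :=
  ⟨dotProduct_add v, fun c w => dotProduct_smul c v w⟩

def polarPoint (ρ α : ℝ) : Fin 3 → ℝ := ![ρ * cos α, ρ * sin α, 1]

lemma dot3_polarPoint_right (v : Fin 3 → ℝ) (ρ α : ℝ) :
    dot3 v (polarPoint ρ α) = ρ * (v 0 * cos α + v 1 * sin α) + v 2 := by
  rw [dot3_eq]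
  show v 0 * (ρ * cos α) + v 1 * (ρ * sin α) + v 2 * 1 = _
  ring

lemma dot3_polarPoint (ρ α β : ℝ) :
    dot3 (polarPoint ρ α) (polarPoint ρ β) = ρ ^ 2 * cos (α - β) + 1 := by
  rw [dot3_polarPoint_right]
  show ρ * (ρ * cos α * cos β + ρ * sin α * sin β) + 1 = _
  rw [cos_sub]; ring

lemma polarPoint_add_int_mul_two_pi (ρ α : ℝ) (k : ℤ) :
    polarPoint ρ (α + k * (2 * π)) = polarPoint ρ α := by
  simp only [polarPoint, cos_add_int_mul_two_pi, sin_add_int_mul_two_pi]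

lemma sin_smul_polarPoint_add_sin_smul_polarPoint (ρ α β φ : ℝ) :
    sin (β - φ) • polarPoint ρ α + sin (φ - α) • polarPoint ρ β = ![ρ * sin (β - α) * cos φ,
      ρ * sin (β - α) * sin φ, sin (β - φ) + sin (φ - α)] := by
  simp only [polarPoint, Matrix.smul_vec3, Matrix.vec3_add, smul_eq_mul]
  refine Matrix.vec3_eq ?_ ?_ (by ring)
  · linear_combination ρ * sin_sub_mul_add_sin_sub_mul_cos α β φ
  · linear_combination ρ * sin_sub_mul_add_sin_sub_mul_sin α β φ

def zRot (α : ℝ) : (Fin 3 → ℝ) →ₗ[ℝ] (Fin 3 → ℝ) :=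
  Matrix.toLin' !![cos α, -sin α, 0; sin α, cos α, 0; 0, 0, 1]

lemma zRot_apply (α : ℝ) (v : Fin 3 → ℝ) :
    zRot α v = ![cos α * v 0 - sin α * v 1, sin α * v 0 + cos α * v 1, v 2] := by
  simp [zRot, sub_eq_add_neg, Matrix.vecHead, Matrix.vecTail]

lemma zRot_apply_zero (α : ℝ) (v : Fin 3 → ℝ) :
    zRot α v 0 = cos α * v 0 - sin α * v 1 := by
  rw [zRot_apply]; rfl

lemma zRot_apply_one (α : ℝ) (v : Fin 3 → ℝ) :
    zRot α v 1 = sin α * v 0 + cos α * v 1 := by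
  rw [zRot_apply]; rfl

lemma zRot_apply_two (α : ℝ) (v : Fin 3 → ℝ) : zRot α v 2 = v 2 := by
  rw [zRot_apply]; rfl

lemma dot3_zRot (α : ℝ) (v w : Fin 3 → ℝ) : dot3 (zRot α v) (zRot α w) = dot3 v w := by
  simp only [dot3_eq, zRot_apply_zero, zRot_apply_one, zRot_apply_two]
  linear_combination (v 0 * w 0 + v 1 * w 1) * sin_sq_add_cos_sq α

lemma zRot_neg_zRot (α : ℝ) (v : Fin 3 → ℝ) : zRot (-α) (zRot α v) = v := by
  refine vec3_ext ?_ ?_ ?_ <;>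
    simp only [zRot_apply_zero, zRot_apply_one, zRot_apply_two, cos_neg, sin_neg]
  · linear_combination v 0 * sin_sq_add_cos_sq α
  · linear_combination v 1 * sin_sq_add_cos_sq α

lemma zRot_polarPoint (α ρ β : ℝ) : zRot α (polarPoint ρ β) = polarPoint ρ (β + α) := by
  rw [zRot_apply, polarPoint, polarPoint, cos_add, sin_add]
  refine Matrix.vec3_eq ?_ ?_ rfl
  · show cos α * (ρ * cos β) - sin α * (ρ * sin β) = _; ring
  · show sin α * (ρ * cos β) + cos α * (ρ * sin β) = _; ring

section Polygon

variable {n : ℕ}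

lemma omegaN_mem_OmegaN {i : ℕ} (hi : i < n) : omegaN n i ∈ OmegaN n :=
  subset_convexHull ℝ _ ⟨i, hi, rfl⟩

lemma OmegaN_subset_of_forall_omegaN {S : Set (Fin 3 → ℝ)} (hS : Convex ℝ S)
    (h : ∀ i < n, omegaN n i ∈ S) : OmegaN n ⊆ S :=
  convexHull_min (by rintro _ ⟨i, hi, rfl⟩; exact h i hi) hS

lemma dot3_nonneg_of_mem_VposN {f y : Fin 3 → ℝ} (hf : ∀ i < n, 0 ≤ dot3 (omegaN n i) f)
    (hy : y ∈ VposN n) : 0 ≤ dot3 y f := by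
  obtain ⟨c, hc, ω, hω, rfl⟩ := hy
  have hsub : OmegaN n ⊆ {w | 0 ≤ dot3 f w} :=
    OmegaN_subset_of_forall_omegaN (convex_halfSpace_ge (isLinearMap_dot3 f) 0)
      fun i hi => by simpa [dot3_comm] using hf i hi
  rw [dot3_smul_left, dot3_comm]
  exact mul_nonneg hc (hsub hω)

lemma mem_EffN_iff {f : Fin 3 → ℝ} :
    f ∈ EffN n ↔ ∀ i < n, dot3 f (omegaN n i) ∈ Set.Icc (0 : ℝ) 1 := by
  refine ⟨fun hf i hi => hf _ (omegaN_mem_OmegaN hi), fun hf => ?_⟩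
  have hconv : Convex ℝ {w | dot3 f w ∈ Set.Icc (0 : ℝ) 1} :=
    (convex_halfSpace_ge (isLinearMap_dot3 f) 0).inter
      (convex_halfSpace_le (isLinearMap_dot3 f) 1)
  exact OmegaN_subset_of_forall_omegaN hconv hf

lemma mem_VdualN_iff_forall_omegaN {x : Fin 3 → ℝ} :
    x ∈ VdualN n ↔ ∀ i < n, 0 ≤ dot3 x (omegaN n i) := by
  constructor
  · rintro ⟨c, hc, f, hf, rfl⟩ i hi
    rw [dot3_smul_left]
    exact mul_nonneg hc (mem_EffN_iff.mp hf i hi).1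
  · intro h
    -- rescale `x` by a bound `M` for its values on the vertices, hence on `Ω_n`
    set M : ℝ := 1 + ∑ i ∈ range n, dot3 x (omegaN n i)
    have hsum_nonneg : 0 ≤ ∑ i ∈ range n, dot3 x (omegaN n i) :=
      sum_nonneg fun i hi => h i (mem_range.mp hi)
    have hM : 0 < M := by linarith
    refine ⟨M, hM.le, M⁻¹ • x, mem_EffN_iff.mpr fun i hi => ?_, by
      rw [smul_smul, mul_inv_cancel₀ hM.ne', one_smul]⟩
    have hle : dot3 x (omegaN n i) ≤ ∑ j ∈ range n, dot3 x (omegaN n j) :=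
      single_le_sum (fun j hj => h j (mem_range.mp hj)) (mem_range.mpr hi)
    rw [dot3_smul_left]
    exact ⟨mul_nonneg (inv_nonneg.mpr hM.le) (h i hi),
      (inv_mul_le_iff₀ hM).mpr (by linarith)⟩

lemma add_mem_VposN {x y : Fin 3 → ℝ} (hx : x ∈ VposN n) (hy : y ∈ VposN n) :
    x + y ∈ VposN n := by
  obtain ⟨a, ha, ω, hω, rfl⟩ := hx
  obtain ⟨b, hb, ω', hω', rfl⟩ := hy
  rcases (add_nonneg ha hb).eq_or_lt with hab | hab
  · obtain ⟨rfl, rfl⟩ : a = 0 ∧ b = 0 := ⟨by linarith, by linarith⟩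
    exact ⟨0, le_rfl, ω, hω, by simp⟩
  · refine ⟨a + b, hab.le, (a / (a + b)) • ω + (b / (a + b)) • ω', ?_, ?_⟩
    · exact convex_convexHull ℝ _ hω hω' (by positivity) (by positivity)
        (by field_simp)
    · rw [smul_add, smul_smul, smul_smul, mul_div_cancel₀ _ hab.ne',
        mul_div_cancel₀ _ hab.ne']

lemma smul_mem_VposN {c : ℝ} (hc : 0 ≤ c) {ω : Fin 3 → ℝ} (hω : ω ∈ OmegaN n) :
    c • ω ∈ VposN n :=
  ⟨c, hc, ω, hω, rfl⟩

lemma natCast_mul_thetaN (hn : n ≠ 0) : n * thetaN n = π := by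
  unfold thetaN; field_simp

lemma thetaN_pos (hn : n ≠ 0) : 0 < thetaN n := by
  unfold thetaN; positivity

lemma thetaN_le_pi_div_three (hn : 3 ≤ n) : thetaN n ≤ π / 3 :=
  div_le_div_of_nonneg_left pi_pos.le (by norm_num) (by exact_mod_cast hn)

lemma rN_sq_mul_cos_thetaN (hn : 3 ≤ n) : rN n ^ 2 * cos (thetaN n) = 1 := by
  have hcos : 0 < cos (thetaN n) := cos_pos_of_mem_Ioo
    ⟨by linarith [thetaN_pos (by omega : n ≠ 0), pi_pos], by
      linarith [thetaN_le_pi_div_three hn, pi_pos]⟩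
  rw [rN, sq_sqrt (inv_nonneg.mpr hcos.le), inv_mul_cancel₀ hcos.ne']

lemma cos_two_mul_add_one_mul_thetaN_le (m : ℤ) :
    cos ((2 * m + 1) * thetaN n) ≤ cos (thetaN n) := by
  rcases Nat.eq_zero_or_pos n with rfl | hn
  · simp [thetaN]
  -- reduce `2m + 1` modulo `2n` to an odd `l ∈ [1, 2n - 1]`, so that `lθ ∈ [θ, 2π - θ]`
  set θ := thetaN n
  have h2n : (0 : ℤ) < 2 * n := by omega
  set l := (2 * m + 1) % (2 * n)
  have hl : 1 ≤ l ∧ l ≤ 2 * n - 1 := by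
    have hodd : l % 2 = 1 := by
      rw [Int.emod_emod_of_dvd _ (dvd_mul_right 2 _)]; omega
    have := Int.emod_nonneg (2 * m + 1) h2n.ne'
    have := Int.emod_lt_of_pos (2 * m + 1) h2n
    omega
  have hnθ := natCast_mul_thetaN hn.ne'
  have hθ := thetaN_pos hn.ne'
  have hperiod : (2 * m + 1 : ℝ) * θ = l * θ + ((2 * m + 1) / (2 * n) : ℤ) * (2 * π) := by
    have := congrArg (fun k : ℤ => (k : ℝ) * θ) (Int.emod_add_mul_ediv (2 * m + 1) (2 * n))
    push_cast at this
    rw [← this, ← hnθ]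
    ring
  have hl₁ : (1 : ℝ) ≤ l := by exact_mod_cast hl.1
  have hl₂ : (l : ℝ) ≤ 2 * n - 1 := by exact_mod_cast hl.2
  rw [hperiod, cos_add_int_mul_two_pi]
  apply cos_le_cos_of_le_of_le_two_pi_sub hθ.le <;> nlinarith

lemma omegaN_eq_polarPoint (i : ℕ) : omegaN n i = polarPoint (rN n) (2 * i * thetaN n) := rfl

lemma exists_omegaN_eq_polarPoint (hn : n ≠ 0) (m : ℤ) :
    ∃ i < n, omegaN n i = polarPoint (rN n) (2 * m * thetaN n) := by
  have hn' : (0 : ℤ) < n := by omega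
  obtain ⟨k, hk⟩ := Int.eq_ofNat_of_zero_le (Int.emod_nonneg m hn'.ne')
  refine ⟨k, by have := Int.emod_lt_of_pos m hn'; omega, ?_⟩
  have hangle : 2 * m * thetaN n = 2 * k * thetaN n + (m / n : ℤ) * (2 * π) := by
    have := congrArg (fun z : ℤ => (z : ℝ)) (Int.emod_add_mul_ediv m n)
    rw [hk] at this
    push_cast at this
    rw [← natCast_mul_thetaN hn]
    linear_combination (-2 * thetaN n) * this
  rw [hangle, polarPoint_add_int_mul_two_pi, omegaN_eq_polarPoint]

def facetNormal (n : ℕ) (j : ℤ) : Fin 3 → ℝ :=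
  polarPoint (rN n) ((2 * j + 1) * thetaN n + π)

lemma facetNormal_eq (hn : n ≠ 0) (j : ℤ) :
    facetNormal n j = polarPoint (rN n) ((2 * j + 1 + n) * thetaN n) := by
  rw [facetNormal, ← natCast_mul_thetaN hn]; congr 1; ring

lemma dot3_omegaN_facetNormal_nonneg (hn : 3 ≤ n) (i : ℕ) (j : ℤ) :
    0 ≤ dot3 (omegaN n i) (facetNormal n j) := by
  have hcos := cos_two_mul_add_one_mul_thetaN_le (n := n) (i - j - 1)
  have hangle : 2 * i * thetaN n - ((2 * j + 1) * thetaN n + π) =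
      (2 * ((i : ℤ) - j - 1 : ℤ) + 1) * thetaN n - π := by push_cast; ring
  rw [omegaN_eq_polarPoint, facetNormal, dot3_polarPoint, hangle, cos_sub_pi]
  nlinarith [rN_sq_mul_cos_thetaN hn, sq_nonneg (rN n)]

lemma sum_exp_two_mul_thetaN (hn : 1 < n) :
    ∑ j ∈ range n, Complex.exp ((2 * j * thetaN n : ℝ) * Complex.I) = 0 := by
  have hζ := Complex.isPrimitiveRoot_exp n (by omega)
  rw [← hζ.geom_sum_eq_zero hn]
  refine sum_congr rfl fun j _ => ?_
  rw [← Complex.exp_nat_mul, thetaN]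
  push_cast
  ring_nf

lemma sum_cos_two_mul_thetaN (hn : 1 < n) : ∑ j ∈ range n, cos (2 * j * thetaN n) = 0 := by
  simpa [Complex.exp_re] using congrArg Complex.re (sum_exp_two_mul_thetaN hn)

lemma sum_sin_two_mul_thetaN (hn : 1 < n) : ∑ j ∈ range n, sin (2 * j * thetaN n) = 0 := by
  simpa [Complex.exp_im] using congrArg Complex.im (sum_exp_two_mul_thetaN hn)

lemma uEff_mem_OmegaN (hn : 1 < n) : uEff ∈ OmegaN n := by
  have hn0 : (n : ℝ) ≠ 0 := by positivity
  have hcentroid : ∑ j ∈ range n, (n : ℝ)⁻¹ • omegaN n j = uEff := by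
    refine vec3_ext ?_ ?_ ?_ <;> simp [Finset.sum_apply, omegaN, uEff, ← mul_sum,
      sum_cos_two_mul_thetaN hn, sum_sin_two_mul_thetaN hn, hn0]
  rw [← hcentroid]
  refine (convex_convexHull ℝ _).sum_mem (fun _ _ => by positivity) ?_
    fun j hj => omegaN_mem_OmegaN (mem_range.mp hj)
  rw [sum_const, card_range, nsmul_eq_mul, mul_inv_cancel₀ hn0]

lemma polarPoint_mem_OmegaN (hn : n ≠ 0) (m : ℤ) :
    polarPoint (rN n) (2 * m * thetaN n) ∈ OmegaN n := by
  obtain ⟨i, hi, h⟩ := exists_omegaN_eq_polarPoint hn m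
  exact h ▸ omegaN_mem_OmegaN hi

lemma mem_VposN_of_mem_sector (hn : 3 ≤ n) (i : ℤ) {ρ φ h : ℝ} (hρ : 0 ≤ ρ)
    (hαφ : 2 * i * thetaN n ≤ φ) (hφβ : φ ≤ 2 * i * thetaN n + 2 * thetaN n)
    (hh : ρ * rN n * cos (φ - (2 * i + 1) * thetaN n) ≤ h) :
    ![ρ * cos φ, ρ * sin φ, h] ∈ VposN n := by
  set θ := thetaN n
  set r := rN n
  set α := 2 * i * θ
  have hθ : 0 < θ := thetaN_pos (by omega)
  have hr : r ^ 2 * cos θ = 1 := rN_sq_mul_cos_thetaN hn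
  have hr0 : r ≠ 0 := by rintro h; simp [h] at hr
  have hθ3 : θ ≤ π / 3 := thetaN_le_pi_div_three hn
  have hsin2θ : 0 < sin (2 * θ) := sin_pos_of_pos_of_lt_pi (by positivity) (by linarith)
  -- the weights of the two vertices bounding the sector come from the sine rule
  set s := ρ / (r * sin (2 * θ))
  have hs : 0 ≤ s := div_nonneg hρ (mul_nonneg (sqrt_nonneg _) hsin2θ.le)
  have hsr : s * (r * sin (2 * θ)) = ρ := div_mul_cancel₀ ρ (mul_ne_zero hr0 hsin2θ.ne')
  have ha : 0 ≤ s * sin (α + 2 * θ - φ) :=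
    mul_nonneg hs (sin_nonneg_of_nonneg_of_le_pi (by linarith) (by linarith))
  have hb : 0 ≤ s * sin (φ - α) :=
    mul_nonneg hs (sin_nonneg_of_nonneg_of_le_pi (by linarith) (by linarith))
  have hheight :
      s * (sin (α + 2 * θ - φ) + sin (φ - α)) = ρ * r * cos (φ - (2 * i + 1) * θ) := by
    rw [sin_add_sin, show (α + 2 * θ - φ + (φ - α)) / 2 = θ by ring,
      show (α + 2 * θ - φ - (φ - α)) / 2 = -(φ - (2 * i + 1) * θ) by ring, cos_neg]
    rw [sin_two_mul] at hsr
    linear_combination cos (φ - (2 * i + 1) * θ) * (r * hsr - 2 * s * sin θ * hr)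
  have hdecomp : ![ρ * cos φ, ρ * sin φ, h] =
      (s * sin (α + 2 * θ - φ)) • polarPoint r α
        + (s * sin (φ - α)) • polarPoint r (α + 2 * θ)
        + (h - ρ * r * cos (φ - (2 * i + 1) * θ)) • uEff := by
    rw [← smul_smul, ← smul_smul, ← smul_add, sin_smul_polarPoint_add_sin_smul_polarPoint,
      add_sub_cancel_left, ← hheight, ← hsr]
    simp only [uEff, Matrix.smul_vec3, Matrix.vec3_add, smul_eq_mul]
    refine Matrix.vec3_eq ?_ ?_ ?_ <;> ring
  have hβ : α + 2 * θ = 2 * ((i + 1 : ℤ) : ℝ) * θ := by push_cast; ring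
  rw [hdecomp]
  refine add_mem_VposN (add_mem_VposN (smul_mem_VposN ha (polarPoint_mem_OmegaN (by omega) i))
    (smul_mem_VposN hb ?_)) (smul_mem_VposN (by linarith) (uEff_mem_OmegaN (by omega)))
  rw [hβ]
  exact polarPoint_mem_OmegaN (by omega) (i + 1)

lemma mem_VposN_of_forall_facetNormal (hn : 3 ≤ n) {y : Fin 3 → ℝ}
    (H : ∀ j : ℤ, 0 ≤ dot3 y (facetNormal n j)) : y ∈ VposN n := by
  set θ := thetaN n
  have h2θ : 0 < 2 * θ := by linarith [thetaN_pos (n := n) (by omega)]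
  set z : ℂ := ⟨y 0, y 1⟩
  have hy0 : y 0 = ‖z‖ * cos z.arg := (Complex.norm_mul_cos_arg z).symm
  have hy1 : y 1 = ‖z‖ * sin z.arg := (Complex.norm_mul_sin_arg z).symm
  have hy : y = ![‖z‖ * cos z.arg, ‖z‖ * sin z.arg, y 2] := vec3_ext hy0 hy1 rfl
  set i := ⌊z.arg / (2 * θ)⌋
  have hαφ : 2 * i * θ ≤ z.arg := by
    have := Int.floor_le (z.arg / (2 * θ))
    rw [le_div_iff₀ h2θ] at this
    linarith
  have hφβ : z.arg ≤ 2 * i * θ + 2 * θ := by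
    have := (Int.lt_floor_add_one (z.arg / (2 * θ))).le
    rw [div_le_iff₀ h2θ] at this
    linarith
  have hfacet := H i
  rw [facetNormal, dot3_polarPoint_right, hy0, hy1, cos_add_pi, sin_add_pi] at hfacet
  rw [hy]
  exact mem_VposN_of_mem_sector hn i (norm_nonneg z) hαφ hφβ (by rw [cos_sub]; linarith)

lemma mem_VposN_iff (hn : 3 ≤ n) {y : Fin 3 → ℝ} :
    y ∈ VposN n ↔ ∀ j : ℤ, 0 ≤ dot3 y (facetNormal n j) :=
  ⟨fun hy j => dot3_nonneg_of_mem_VposN (fun i _ => dot3_omegaN_facetNormal_nonneg hn i j) hy,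
    mem_VposN_of_forall_facetNormal hn⟩

lemma mem_VdualN_iff (hn : n ≠ 0) {x : Fin 3 → ℝ} :
    x ∈ VdualN n ↔ ∀ m : ℤ, 0 ≤ dot3 x (polarPoint (rN n) (2 * m * thetaN n)) := by
  rw [mem_VdualN_iff_forall_omegaN]
  refine ⟨fun h m => ?_, fun h i _ => by
    rw [omegaN_eq_polarPoint]; simpa only [Int.cast_natCast] using h i⟩
  obtain ⟨i, hi, hω⟩ := exists_omegaN_eq_polarPoint hn m
  exact hω ▸ h i hi

lemma VdualN_eq_VposN_of_odd (hn : 3 ≤ n) (hodd : Odd n) : VdualN n = VposN n := by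
  obtain ⟨h, rfl⟩ := hodd
  ext x
  rw [mem_VdualN_iff (by omega), mem_VposN_iff hn]
  have hfacet (j : ℤ) : facetNormal (2 * h + 1) j =
      polarPoint (rN (2 * h + 1)) (2 * ((j + h + 1 : ℤ) : ℝ) * thetaN (2 * h + 1)) := by
    rw [facetNormal_eq (by omega)]; congr 1; push_cast; ring
  refine ⟨fun hx j => hfacet j ▸ hx _, fun hx m => ?_⟩
  have := hx (m - h - 1)
  rwa [hfacet, show m - h - 1 + h + 1 = m by ring] at this

lemma TN_eq_zRot_of_even (hn : Even n) : TN n = zRot (-thetaN n) := by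
  rw [TN, if_pos hn, zRot, cos_neg, sin_neg, neg_neg]

lemma TN_image_VdualN_of_even (hn : 3 ≤ n) (heven : Even n) : TN n '' VdualN n = VposN n := by
  obtain ⟨h, rfl⟩ := heven
  have hrot (m : ℤ) : TN (h + h) (polarPoint (rN (h + h)) (2 * m * thetaN (h + h))) =
      facetNormal (h + h) (m - h - 1) := by
    rw [TN_eq_zRot_of_even ⟨h, rfl⟩, zRot_polarPoint, facetNormal_eq (by omega)]
    congr 1; push_cast; ring
  ext y
  rw [mem_VposN_iff hn]
  constructor
  · rintro ⟨x, hx, rfl⟩ j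
    have := (mem_VdualN_iff (by omega)).mp hx (j + h + 1)
    rwa [← dot3_zRot (-thetaN (h + h)), ← TN_eq_zRot_of_even ⟨h, rfl⟩, hrot,
      show j + h + 1 - h - 1 = j by ring] at this
  · intro hy
    refine ⟨zRot (thetaN (h + h)) y, (mem_VdualN_iff (by omega)).mpr fun m => ?_, ?_⟩
    · rw [← dot3_zRot (-thetaN (h + h)), zRot_neg_zRot, ← TN_eq_zRot_of_even ⟨h, rfl⟩,
        hrot]
      exact hy _
    · rw [TN_eq_zRot_of_even ⟨h, rfl⟩, zRot_neg_zRot]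

lemma TN_eN_of_even (hn : Even n) (i : ℕ) : TN n (eN n i) = (1 / 2 : ℝ) • omegaN n i := by
  have he : eN n i = (1 / 2 : ℝ) • polarPoint (rN n) ((2 * i + 1) * thetaN n) := by
    rw [eN, if_pos hn, polarPoint]
  rw [he, map_smul, TN_eq_zRot_of_even hn, zRot_polarPoint, omegaN_eq_polarPoint,
    show (2 * i + 1) * thetaN n + -thetaN n = 2 * i * thetaN n by ring]

lemma eN_of_odd (hn : Odd n) (i : ℕ) : eN n i = RN n • omegaN n i := by
  rw [eN, if_neg (Nat.not_even_iff_odd.mpr hn), omegaN]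

end Polygon

/-- `T_n` maps the dual cone onto the positive cone; for even `n`,
`T_n(e_n(i)) = ½ ω_n(i)`, and for odd `n`, `e_n(i) = R_n ω_n(i)` and the theory is
self-dual.  In particular every regular polygon theory is weakly self-dual and every
odd-sided one is self-dual. -/
theorem polygon_weak_self_duality (n : ℕ) (hn : 3 ≤ n) :
    (TN n) '' VdualN n = VposN n ∧
    (Even n → ∀ i < n, TN n (eN n i) = (1 / 2 : ℝ) • omegaN n i) ∧
    (Odd n → (∀ i < n, eN n i = RN n • omegaN n i) ∧ VdualN n = VposN n) := by
  refine ⟨?_, fun heven i _ => TN_eN_of_even heven i,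
    fun hodd => ⟨fun i _ => eN_of_odd hodd i, VdualN_eq_VposN_of_odd hn hodd⟩⟩
  rcases Nat.even_or_odd n with heven | hodd
  · exact TN_image_VdualN_of_even hn heven
  · rw [TN, if_neg (Nat.not_even_iff_odd.mpr hodd), LinearMap.id_coe, Set.image_id]
    exact VdualN_eq_VposN_of_odd hn hodd
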